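/- arXiv:2311.15154 — 9 statements merged into one kernel-verified Lean document; each statement's English description precedes it below -/
import Mathlib

section
/- Let ψ be a proper closed convex function and V a continuous monotone operator on dom ψ. Then x* ∈ dom ψ is a weak solution (i.e. ⟨V(x), x - x*⟩ + ψ(x) ≥ ψ(x*) for all x ∈ dom ψ) if and only if it is a strong solution (i.e. ⟨V(x*), x - x*⟩ + ψ(x) ≥ ψ(x*) for all x ∈ dom ψ). -/
open RealInnerProductSpace

theorem stmt_3 {E : Type*} [NormedAddCommGroup E] [InnerProductSpace ℝ E]
    [FiniteDimensional ℝ E]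
    (S : Set E) (ψ : E → ℝ) (V : E → E)
    (hS : Convex ℝ S) (hψ : ConvexOn ℝ S ψ)
    (hVcont : ContinuousOn V S)
    (hVmono : ∀ x ∈ S, ∀ y ∈ S, 0 ≤ ⟪V x - V y, x - y⟫)
    (xs : E) (hxs : xs ∈ S) :
    (∀ x ∈ S, ⟪V x, x - xs⟫ + ψ x ≥ ψ xs) ↔
      (∀ x ∈ S, ⟪V xs, x - xs⟫ + ψ x ≥ ψ xs) := by
  constructor
  · intro hweak x hx
    set d := x - xs with hd
    have hmem : ∀ t ∈ Set.Icc (0:ℝ) 1, xs + t • d ∈ S := by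
      intro t ht
      have h := hS hxs hx (by linarith [ht.2] : (0:ℝ) ≤ 1 - t) ht.1 (by ring)
      have : xs + t • d = (1 - t) • xs + t • x := by
        rw [hd]; module
      rwa [this]
    have key : ∀ t ∈ Set.Ioc (0:ℝ) 1, ψ xs ≤ ⟪V (xs + t • d), d⟫ + ψ x := by
      intro t ht
      have ht0 : 0 < t := ht.1
      have hz : xs + t • d ∈ S := hmem t ⟨le_of_lt ht0, ht.2⟩
      have h1 := hweak _ hz
      have hzs : xs + t • d - xs = t • d := by abel
      rw [hzs, real_inner_smul_right] at h1
      have hcv : ψ (xs + t • d) ≤ (1 - t) * ψ xs + t * ψ x := by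
        have h := hψ.2 hxs hx (by linarith [ht.2] : (0:ℝ) ≤ 1 - t) (le_of_lt ht0)
          (by ring)
        have he : xs + t • d = (1 - t) • xs + t • x := by rw [hd]; module
        rw [he]
        simpa using h
      have : t * ψ xs ≤ t * (⟪V (xs + t • d), d⟫ + ψ x) := by nlinarith
      exact le_of_mul_le_mul_left this ht0
    -- pass to the limit t → 0+
    have hgt : Filter.Tendsto (fun t : ℝ => xs + t • d) (nhdsWithin 0 (Set.Ioi 0))
        (nhdsWithin xs S) := by
      rw [tendsto_nhdsWithin_iff]
      constructor
      · have : Filter.Tendsto (fun t : ℝ => xs + t • d) (nhds 0) (nhds (xs + (0:ℝ) • d)) :=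
          ((continuous_const.add (continuous_id.smul continuous_const)).tendsto 0)
        simpa using this.mono_left nhdsWithin_le_nhds
      · filter_upwards [Filter.inter_mem (self_mem_nhdsWithin)
          (nhdsWithin_le_nhds (Iic_mem_nhds (by norm_num : (0:ℝ) < 1)))] with t ht
        exact hmem t ⟨le_of_lt ht.1, ht.2⟩
    have hVt : Filter.Tendsto (fun t : ℝ => ⟪V (xs + t • d), d⟫ + ψ x)
        (nhdsWithin 0 (Set.Ioi 0)) (nhds (⟪V xs, d⟫ + ψ x)) := by
      have h1 := Filter.Tendsto.comp (hVcont xs hxs) hgt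
      have h2 : Filter.Tendsto (fun y => ⟪y, d⟫) (nhds (V xs)) (nhds ⟪V xs, d⟫) :=
        ((continuous_id.inner continuous_const).tendsto (V xs))
      exact ((h2.comp h1).add tendsto_const_nhds)
    have hev : ∀ᶠ t in nhdsWithin (0:ℝ) (Set.Ioi 0),
        ψ xs ≤ ⟪V (xs + t • d), d⟫ + ψ x := by
      filter_upwards [Filter.inter_mem (self_mem_nhdsWithin)
        (nhdsWithin_le_nhds (Iic_mem_nhds (by norm_num : (0:ℝ) < 1)))] with t ht
      exact key t ⟨ht.1, ht.2⟩
    exact ge_of_tendsto hVt hev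
  · intro hstrong x hx
    have h := hstrong x hx
    have hm := hVmono x hx xs hxs
    rw [inner_sub_left] at hm
    linarith
end

section
/- Consider the projected gradient method x_{k+1} = π_Q(x_k - h_k ∇f(x_k)) for minimizing a convex function f with L-Lipschitz gradient over a closed convex set Q ⊆ ℝⁿ, with step sizes h_k ∈ (0, 1/L]. Then for every k, ‖x_{k+1} - x*‖² ≤ ‖x_k - x*‖² - 2h_k(f(x_{k+1}) - f(x*)), where x* is a minimizer of f over Q. In particular, the distance to the minimizer is monotonically non-increasing. -/
/-!
Test the variational inequality of the projection at `x*`: it bounds `⟪x_{k+1} - x_k, x* - x_{k+1}⟫`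
from below by `-h ⟪∇f(x_k), x* - x_{k+1}⟫`. Splitting `x* - x_{k+1}` through `x_k`, convexity gives
`⟪∇f(x_k), x* - x_k⟫ ≤ f(x*) - f(x_k)` and the descent lemma gives
`-⟪∇f(x_k), x_{k+1} - x_k⟫ ≤ f(x_k) - f(x_{k+1}) + L/2 ‖x_{k+1} - x_k‖²`. Expanding `‖x_k - x*‖²`
around `x_{k+1}` yields the claim, the term `h L/2 ‖x_{k+1} - x_k‖²` being absorbed by
`‖x_{k+1} - x_k‖² / 2` since `h L ≤ 1`.
-/

open RealInnerProductSpace AffineMap Set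

section GradientInequalities
variable {E : Type*} [NormedAddCommGroup E] [InnerProductSpace ℝ E] [CompleteSpace E]
  {f : E → ℝ} {g : E → E}

theorem HasGradientAt.hasDerivAt_comp_lineMap {x y v : E} {t : ℝ}
    (h : HasGradientAt f v (lineMap x y t)) :
    HasDerivAt (fun s ↦ f (lineMap x y s)) ⟪v, y - x⟫ t := by
  have := h.hasFDerivAt.comp_hasDerivAt t hasDerivAt_lineMap
  simp only [InnerProductSpace.toDual_apply_apply] at this
  exact this

theorem ConvexOn.add_inner_gradient_le (hf : ConvexOn ℝ univ f)
    (hg : ∀ x, HasGradientAt f (g x) x) (x y : E) :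
    f x + ⟪g x, y - x⟫ ≤ f y := by
  have hline : ConvexOn ℝ univ (fun s ↦ f (lineMap x y s)) := hf.comp_affineMap (lineMap x y)
  have := hline.le_slope_of_hasDerivAt (mem_univ 0) (mem_univ 1) zero_lt_one
    (hg _).hasDerivAt_comp_lineMap
  simp only [lineMap_apply_zero, lineMap_apply_one, slope_def_field, sub_zero, div_one] at this
  linarith

theorem le_add_inner_gradient_add_sq {L : ℝ} (hg : ∀ x, HasGradientAt f (g x) x)
    (hLip : ∀ x y, ‖g x - g y‖ ≤ L * ‖x - y‖) (x y : E) :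
    f y ≤ f x + ⟪g x, y - x⟫ + L / 2 * ‖y - x‖ ^ 2 := by
  set d := y - x
  have hφ (t : ℝ) := (hg (lineMap x y t)).hasDerivAt_comp_lineMap
  have hB (t : ℝ) : HasDerivAt (fun s ↦ f x + s * ⟪g x, d⟫ + L / 2 * ‖d‖ ^ 2 * s ^ 2)
      (⟪g x, d⟫ + L * ‖d‖ ^ 2 * t) t := by
    have := (((hasDerivAt_id t).mul_const ⟪g x, d⟫).const_add (f x)).add
      ((hasDerivAt_pow 2 t).const_mul (L / 2 * ‖d‖ ^ 2))
    exact this.congr_deriv (by push_cast; ring)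
  have hslope (t : ℝ) (ht : 0 ≤ t) : ⟪g (lineMap x y t), d⟫ ≤ ⟪g x, d⟫ + L * ‖d‖ ^ 2 * t := by
    have hdist : lineMap x y t - x = t • d := lineMap_vsub_left x y t
    calc ⟪g (lineMap x y t), d⟫ = ⟪g x, d⟫ + ⟪g (lineMap x y t) - g x, d⟫ := by
          rw [inner_sub_left]; ring
      _ ≤ ⟪g x, d⟫ + L * ‖lineMap x y t - x‖ * ‖d‖ := by
          gcongr
          exact (real_inner_le_norm _ _).trans
            (mul_le_mul_of_nonneg_right (hLip _ _) (norm_nonneg _))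
      _ = ⟪g x, d⟫ + L * ‖d‖ ^ 2 * t := by
          rw [hdist, norm_smul, Real.norm_of_nonneg ht]; ring
  have := image_le_of_deriv_right_le_deriv_boundary (a := 0) (b := 1)
    (fun t _ ↦ (hφ t).continuousAt.continuousWithinAt)
    (fun t _ ↦ (hφ t).hasDerivWithinAt) (by simp)
    (fun t _ ↦ (hB t).continuousAt.continuousWithinAt)
    (fun t _ ↦ (hB t).hasDerivWithinAt) (fun t ht ↦ hslope t ht.1) (right_mem_Icc.2 zero_le_one)
  simpa using this

theorem norm_sub_sq_le_of_projected_gradient_step {L : ℝ} (hf : ConvexOn ℝ univ f)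
    (hg : ∀ x, HasGradientAt f (g x) x) (hLip : ∀ x y, ‖g x - g y‖ ≤ L * ‖x - y‖)
    {a b p : E} {s : ℝ} (hs : 0 ≤ s) (hsL : s * L ≤ 1) (hb : 0 ≤ ⟪b - a + s • g a, p - b⟫) :
    ‖b - p‖ ^ 2 ≤ ‖a - p‖ ^ 2 - 2 * s * (f b - f p) := by
  have hVI : 0 ≤ ⟪b - a, p - b⟫ + s * ⟪g a, p - b⟫ := by
    rwa [inner_add_left, real_inner_smul_left] at hb
  have hpyth : ‖a - p‖ ^ 2 = ‖b - p‖ ^ 2 + ‖b - a‖ ^ 2 + 2 * ⟪b - a, p - b⟫ := by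
    rw [show a - p = (b - p) - (b - a) by abel, norm_sub_sq_real,
      show p - b = -(b - p) by abel, inner_neg_right, real_inner_comm]
    ring
  have hgrad : ⟪g a, p - b⟫ ≤ f p - f b + L / 2 * ‖b - a‖ ^ 2 := by
    have hsplit : ⟪g a, p - b⟫ = ⟪g a, p - a⟫ - ⟪g a, b - a⟫ := by
      rw [← inner_sub_right, sub_sub_sub_cancel_right]
    linarith [hf.add_inner_gradient_le hg a p, le_add_inner_gradient_add_sq hg hLip a b]
  have habsorb : s * (L / 2 * ‖b - a‖ ^ 2) ≤ ‖b - a‖ ^ 2 / 2 := by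
    nlinarith [sq_nonneg ‖b - a‖]
  linarith [mul_le_mul_of_nonneg_left hgrad hs]

end GradientInequalities

theorem stmt_6_general {n : ℕ} (f : EuclideanSpace ℝ (Fin n) → ℝ)
    (g : EuclideanSpace ℝ (Fin n) → EuclideanSpace ℝ (Fin n))
    (Q : Set (EuclideanSpace ℝ (Fin n)))
    (L : ℝ)
    (hf : ConvexOn ℝ Set.univ f)
    (hg : ∀ x, HasGradientAt f (g x) x)
    (hLip : ∀ x y, ‖g x - g y‖ ≤ L * ‖x - y‖)
    (x : ℕ → EuclideanSpace ℝ (Fin n)) (h : ℕ → ℝ)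
    (hstep : ∀ k, 0 < h k ∧ h k ≤ 1 / L)
    (hproj : ∀ k, ∀ y ∈ Q, ⟪x (k+1) - x k + h k • g (x k), y - x (k+1)⟫ ≥ 0)
    (xstar : EuclideanSpace ℝ (Fin n)) (hxstar : xstar ∈ Q) :
    ∀ k, ‖x (k+1) - xstar‖^2 ≤ ‖x k - xstar‖^2 - 2 * h k * (f (x (k+1)) - f xstar) := by
  intro k
  obtain ⟨hpos, hle⟩ := hstep k
  have hL : 0 < L := one_div_pos.mp (hpos.trans_le hle)
  exact norm_sub_sq_le_of_projected_gradient_step hf hg hLip hpos.le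
    (by simpa using (le_div_iff₀ hL).mp hle) (hproj k xstar hxstar)

theorem stmt_6 {n : ℕ} (f : EuclideanSpace ℝ (Fin n) → ℝ)
    (g : EuclideanSpace ℝ (Fin n) → EuclideanSpace ℝ (Fin n))
    (Q : Set (EuclideanSpace ℝ (Fin n)))
    (L : ℝ) (hL : 0 < L)
    (hf : ConvexOn ℝ Set.univ f)
    (hg : ∀ x, HasGradientAt f (g x) x)
    (hLip : ∀ x y, ‖g x - g y‖ ≤ L * ‖x - y‖)
    (hQc : IsClosed Q) (hQconv : Convex ℝ Q)
    (x : ℕ → EuclideanSpace ℝ (Fin n)) (h : ℕ → ℝ)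
    (hstep : ∀ k, 0 < h k ∧ h k ≤ 1 / L)
    (hxQ : ∀ k, x k ∈ Q)
    (hproj : ∀ k, ∀ y ∈ Q, ⟪x (k+1) - x k + h k • g (x k), y - x (k+1)⟫ ≥ 0)
    (xstar : EuclideanSpace ℝ (Fin n)) (hxstar : xstar ∈ Q)
    (hmin : ∀ y ∈ Q, f xstar ≤ f y) :
    ∀ k, ‖x (k+1) - xstar‖^2 ≤ ‖x k - xstar‖^2 - 2 * h k * (f (x (k+1)) - f xstar) :=
  stmt_6_general f g Q L hf hg hLip x h hstep hproj xstar hxstar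
end

section
/- In the setting of the previous recursion, define for 0 ≤ p ≤ m: S¹ = Σ_{i=p}^m h_i, S² = Σ_{i=p}^m h_i², and the averaged point x_{p,m} = (1/S¹)·Σ_{i=p}^m h_i x_{i+1}. Then the merit function μ_Q(x_{p,m}) = sup_{x∈Q} ⟨V(x), x_{p,m} - x⟩ satisfies μ_Q(x_{p,m}) ≤ (1 + L²S²)·D²/(2S¹). -/
open RealInnerProductSpace

/-!
Rewriting the step inequality with `y` fixed as
`‖y - x (k+1)‖² + 2 h_k ⟪V y, x (k+1) - y⟫ ≤ ‖y - x k‖² + h_k² L² D²` and summing over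
`k = p, …, m` telescopes the squared distances, leaving
`2 ∑ h_k ⟪V y, x (k+1) - y⟫ ≤ ‖y - x p‖² + L² D² S² ≤ (1 + L² S²) D²`.
The left side is `2 S¹ ⟪V y, x_{p,m} - y⟫`, since the inner product is affine in its second argument.
-/

theorem add_two_mul_sum_le_of_step {r g h : ℕ → ℝ} {c : ℝ} {p m : ℕ} (hpm : p ≤ m)
    (hstep : ∀ k ∈ Finset.Icc p m, r (k + 1) + 2 * (h k * g k) ≤ r k + h k ^ 2 * c) :
    r (m + 1) + 2 * ∑ i ∈ Finset.Icc p m, h i * g i ≤ r p + c * ∑ i ∈ Finset.Icc p m, h i ^ 2 := by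
  induction m, hpm using Nat.le_induction with
  | base => simpa [mul_comm c] using hstep p (by simp)
  | succ m hpm ih =>
    rw [Finset.sum_Icc_succ_top (by omega), Finset.sum_Icc_succ_top (by omega)]
    have hlast := hstep (m + 1) (Finset.mem_Icc.2 ⟨by omega, le_rfl⟩)
    have := ih fun k hk => hstep k (Finset.Icc_subset_Icc_right (by omega) hk)
    linarith

theorem inner_weighted_average_sub {E ι : Type*} [NormedAddCommGroup E] [InnerProductSpace ℝ E]
    (t : Finset ι) (w : ι → ℝ) (z : ι → E) (v y : E) (hw : ∑ i ∈ t, w i ≠ 0) :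
    ⟪v, (∑ i ∈ t, w i)⁻¹ • ∑ i ∈ t, w i • z i - y⟫ =
      (∑ i ∈ t, w i)⁻¹ * ∑ i ∈ t, w i * ⟪v, z i - y⟫ := by
  simp only [inner_sub_right, real_inner_smul_right, inner_sum, mul_sub, Finset.sum_sub_distrib,
    ← Finset.sum_mul]
  field_simp

theorem stmt_10_general {n : ℕ} (V : EuclideanSpace ℝ (Fin n) → EuclideanSpace ℝ (Fin n))
    (Q : Set (EuclideanSpace ℝ (Fin n)))
    (L D : ℝ)
    (x : ℕ → EuclideanSpace ℝ (Fin n)) (h : ℕ → ℝ)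
    (hh : ∀ k, 0 < h k)
    (hdiam' : ∀ y ∈ Q, ∀ k, ‖y - x k‖ ≤ D)
    (hrec : ∀ k, ∀ y ∈ Q,
      ‖y - x (k+1)‖^2 ≤ ‖y - x k‖^2 + 2 * h k * ⟪V y, y - x (k+1)⟫ + (h k)^2 * L^2 * D^2)
    (p m : ℕ) (hpm : p ≤ m)
    (S1 S2 : ℝ)
    (hS1 : S1 = ∑ i ∈ Finset.Icc p m, h i)
    (hS2 : S2 = ∑ i ∈ Finset.Icc p m, (h i)^2)
    (xavg : EuclideanSpace ℝ (Fin n))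
    (hxavg : xavg = (1 / S1) • ∑ i ∈ Finset.Icc p m, h i • x (i+1)) :
    sSup {z : ℝ | ∃ y ∈ Q, z = ⟪V y, xavg - y⟫} ≤ (1 + L^2 * S2) * D^2 / (2 * S1) := by
  have hS1pos : 0 < S1 := hS1 ▸ Finset.sum_pos (fun i _ => hh i) (Finset.nonempty_Icc.2 hpm)
  refine Real.sSup_le ?_ (by rw [hS2]; positivity)
  rintro _ ⟨y, hy, rfl⟩
  have hsum := add_two_mul_sum_le_of_step (r := fun k => ‖y - x k‖ ^ 2)
    (g := fun k => ⟪V y, x (k + 1) - y⟫) (h := h) (c := L ^ 2 * D ^ 2) hpm fun k _ => by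
      have hflip : ⟪V y, y - x (k + 1)⟫ = -⟪V y, x (k + 1) - y⟫ := by
        rw [← inner_neg_right, neg_sub]
      have hstep := hrec k y hy
      rw [hflip] at hstep
      linarith
  have hfirst : ‖y - x p‖ ^ 2 ≤ D ^ 2 := pow_le_pow_left₀ (norm_nonneg _) (hdiam' y hy p) 2
  have hlast : 0 ≤ ‖y - x (m + 1)‖ ^ 2 := by positivity
  rw [← hS2] at hsum
  rw [hxavg, one_div, hS1, inner_weighted_average_sub _ _ _ _ _ (hS1 ▸ hS1pos.ne'), ← hS1,
    le_div_iff₀ (by positivity)]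
  field_simp
  linarith

theorem stmt_10 {n : ℕ} (V : EuclideanSpace ℝ (Fin n) → EuclideanSpace ℝ (Fin n))
    (Q : Set (EuclideanSpace ℝ (Fin n)))
    (L D : ℝ) (hL : 0 ≤ L) (hD : 0 < D)
    (hQc : IsClosed Q) (hQconv : Convex ℝ Q)
    (hmono : ∀ x ∈ Q, ∀ y ∈ Q, 0 ≤ ⟪V x - V y, x - y⟫)
    (hLip : ∀ x ∈ Q, ∀ y ∈ Q, ‖V x - V y‖ ≤ L * ‖x - y‖)
    (xstar : EuclideanSpace ℝ (Fin n)) (hxstar : xstar ∈ Q)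
    (hdiam : ∀ x ∈ Q, ‖x - xstar‖ ≤ D)
    (x : ℕ → EuclideanSpace ℝ (Fin n)) (h : ℕ → ℝ)
    (hh : ∀ k, 0 < h k) (hxQ : ∀ k, x k ∈ Q)
    (hdiam' : ∀ y ∈ Q, ∀ k, ‖y - x k‖ ≤ D)
    (hrec : ∀ k, ∀ y ∈ Q,
      ‖y - x (k+1)‖^2 ≤ ‖y - x k‖^2 + 2 * h k * ⟪V y, y - x (k+1)⟫ + (h k)^2 * L^2 * D^2)
    (p m : ℕ) (hpm : p ≤ m)
    (S1 S2 : ℝ)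
    (hS1 : S1 = ∑ i ∈ Finset.Icc p m, h i)
    (hS2 : S2 = ∑ i ∈ Finset.Icc p m, (h i)^2)
    (xavg : EuclideanSpace ℝ (Fin n))
    (hxavg : xavg = (1 / S1) • ∑ i ∈ Finset.Icc p m, h i • x (i+1)) :
    sSup {z : ℝ | ∃ y ∈ Q, z = ⟪V y, xavg - y⟫} ≤ (1 + L^2 * S2) * D^2 / (2 * S1) :=
  stmt_10_general V Q L D x h hh hdiam' hrec p m hpm S1 S2 hS1 hS2 xavg hxavg
end

section
/- Let d be differentiable and 1-strongly convex on dom d, with Bregman distance β(x,y) = d(y) - d(x) - ⟨∇d(x), y - x⟩. Let v_{i+1} = prox_{v_i, a_{i+1}}(V_ψ(x_{i+1})) satisfy the optimality condition ⟨a_{i+1}V_ψ(x_{i+1}) + ∇d(v_{i+1}) - ∇d(v_i), x - v_{i+1}⟩ ≥ 0 for all x ∈ dom ψ. Then for every x ∈ dom ψ: β(v_{i+1}, x) ≤ β(v_i, x) - b_{i+1} - a_{i+1}⟨V_ψ(x_{i+1}), x_{i+1} - x⟩, where b_{i+1} = (1/2)a_{i+1}²‖V_ψ(x_{i+1})‖*²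 and a_{i+1} = ⟨V_ψ(x_{i+1}), v_i - x_{i+1}⟩/‖V_ψ(x_{i+1})‖*². -/
open RealInnerProductSpace

theorem stmt_12 {E : Type*} [NormedAddCommGroup E] [InnerProductSpace ℝ E]
    (S : Set E) (d : E → ℝ) (gd : E → E)
    (hsc : ∀ x y : E, d y ≥ d x + ⟪gd x, y - x⟫ + (1/2) * ‖y - x‖^2)
    (β : E → E → ℝ)
    (hβ : ∀ x y : E, β x y = d y - d x - ⟪gd x, y - x⟫)
    (vi vi' xi : E) (hvi : vi ∈ S) (hvi' : vi' ∈ S) (hxi : xi ∈ S)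
    (g : E) (hg : g ≠ 0)
    (a b : ℝ)
    (ha : a = ⟪g, vi - xi⟫ / ‖g‖^2)
    (hb : b = (1/2) * a^2 * ‖g‖^2)
    (hopt : ∀ x ∈ S, ⟪a • g + gd vi' - gd vi, x - vi'⟫ ≥ 0) :
    ∀ x ∈ S, β vi' x ≤ β vi x - b - a * ⟪g, xi - x⟫ := by
  intro x hx
  have hg2 : (0:ℝ) < ‖g‖^2 := by
    have := norm_pos_iff.mpr hg
    positivity
  have ha' : ⟪g, vi - xi⟫ = a * ‖g‖^2 := by
    rw [ha]; field_simp
  have h1 := hsc vi vi'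
  have h2 := hopt x hx
  have h3 : (0:ℝ) ≤ ‖(vi' - vi) + a • g‖^2 := sq_nonneg _
  have h4 : ‖(vi' - vi) + a • g‖^2
      = ‖vi' - vi‖^2 + 2*(a*⟪g, vi' - vi⟫) + a^2*‖g‖^2 := by
    rw [norm_add_sq_real, real_inner_smul_right, norm_smul, mul_pow,
      Real.norm_eq_abs, sq_abs, real_inner_comm]
  rw [h4] at h3
  rw [hβ, hβ, hb]
  simp only [inner_sub_right, inner_sub_left, inner_add_left,
    real_inner_smul_left] at h1 h2 ha' h3 ⊢
  have ha2 : a * (⟪g, vi⟫ - ⟪g, xi⟫) = a * (a * ‖g‖^2) := by rw [ha']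
  nlinarith [h1, h2, h3, ha2]
end

section
/- (Dual Reduced Gradient Method) Let Ψ_0(x) = β(x_0, x) with β a Bregman distance of a 1-strongly convex function d, and Ψ_{t+1}(x) = Ψ_t(x) + a_{t+1}[⟨V(x_{t+1}), x - x_{t+1}⟩ + ψ(x)], with v_t = argmin Ψ_t, a_{t+1} = ⟨V_ψ(x_{t+1}), v_t - x_{t+1}⟩/‖V_ψ(x_{t+1})‖*² > 0, and V_ψ(x_{t+1}) = V(x_{t+1}) + ψ'(x_{t+1}) for some subgradient ψ'(x_{t+1}) ∈ ∂ψ(x_{t+1}). Then for all t ≥ 0: Σ_{i=1}^t a_i ψ(x_i) + Σ_{i=1}^t b_i ≤ Ψ*_t := min_x Ψ_t(x), where b_i = (1/2)a_i²‖V_ψ(x_i)‖*². -/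
open RealInnerProductSpace

theorem stmt_14 {E : Type*} [NormedAddCommGroup E] [InnerProductSpace ℝ E]
    (S : Set E) (ψ : E → ℝ) (Vop : E → E)
    (d : E → ℝ) (gd : E → E)
    (hsc : ∀ x y : E, d y ≥ d x + ⟪gd x, y - x⟫ + (1/2) * ‖y - x‖^2)
    (x0 : E) (hx0 : x0 ∈ S)
    (Ψ : ℕ → E → ℝ) (x v : ℕ → E) (sg : ℕ → E) (Vψ : ℕ → E) (a b : ℕ → ℝ)
    (hΨ0 : ∀ y, Ψ 0 y = d y - d x0 - ⟪gd x0, y - x0⟫)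
    (hΨsucc : ∀ t y, Ψ (t+1) y = Ψ t y + a (t+1) * (⟪Vop (x (t+1)), y - x (t+1)⟫ + ψ y))
    (hxS : ∀ t, x t ∈ S) (hvS : ∀ t, v t ∈ S)
    (hargmin : ∀ t, ∀ y ∈ S, Ψ t (v t) ≤ Ψ t y)
    (hstrong : ∀ t, ∀ y ∈ S, Ψ t y ≥ Ψ t (v t) + (1/2) * ‖y - v t‖^2)
    (hsub : ∀ t, ∀ y ∈ S, ψ y ≥ ψ (x t) + ⟪sg t, y - x t⟫)
    (hVψ : ∀ t, Vψ t = Vop (x t) + sg t)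
    (hVψne : ∀ t, Vψ t ≠ 0)
    (ha : ∀ t, a (t+1) = ⟪Vψ (t+1), v t - x (t+1)⟫ / ‖Vψ (t+1)‖^2)
    (hapos : ∀ t, 0 < a (t+1))
    (hbdef : ∀ i, b i = (1/2) * (a i)^2 * ‖Vψ i‖^2) :
    ∀ t, ∑ i ∈ Finset.Icc 1 t, a i * ψ (x i) + ∑ i ∈ Finset.Icc 1 t, b i ≤
      Ψ t (v t) := by
  intro t
  induction t with
  | zero =>
      simp only [Finset.Icc_self, Finset.Icc_eq_empty_of_lt (by norm_num : (1:ℕ) > 0)]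
      simp only [Finset.sum_empty, add_zero]
      rw [hΨ0]
      have h := hsc x0 (v 0)
      have : (0:ℝ) ≤ (1/2) * ‖v 0 - x0‖^2 := by positivity
      linarith
  | succ t ih =>
      rw [Finset.sum_Icc_succ_top (by omega : 1 ≤ t + 1),
        Finset.sum_Icc_succ_top (by omega : 1 ≤ t + 1)]
      rw [hΨsucc t (v (t+1))]
      -- lower bound Ψ t (v (t+1))
      have h1 := hstrong t (v (t+1)) (hvS (t+1))
      have h2 := hsub (t+1) (v (t+1)) (hvS (t+1))
      set g := Vψ (t+1) with hg
      set a1 := a (t+1) with ha1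
      set u := v (t+1) - v t with hu
      have hgsplit : ⟪g, v (t+1) - x (t+1)⟫ =
          ⟪Vop (x (t+1)), v (t+1) - x (t+1)⟫ + ⟪sg (t+1), v (t+1) - x (t+1)⟫ := by
        rw [hg, hVψ, inner_add_left]
      have hgu : ⟪g, v (t+1) - x (t+1)⟫ = ⟪g, u⟫ + ⟪g, v t - x (t+1)⟫ := by
        rw [hu, ← inner_add_right]
        congr 1
        abel
      have hgne : ‖g‖^2 ≠ 0 := by
        have h0 : g ≠ 0 := hVψne (t+1)
        have : ‖g‖ ≠ 0 := norm_ne_zero_iff.mpr h0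
        positivity
      have hanorm : ⟪g, v t - x (t+1)⟫ = a1 * ‖g‖^2 := by
        rw [ha1, ha t, div_mul_cancel₀ _ hgne]
      -- ½‖u + a1 • g‖² ≥ 0 gives the key inequality
      have hsq : (0:ℝ) ≤ ‖u + a1 • g‖^2 := by positivity
      have hexp : ‖u + a1 • g‖^2 = ‖u‖^2 + 2 * (a1 * ⟪g, u⟫) + a1^2 * ‖g‖^2 := by
        rw [norm_add_sq_real, real_inner_smul_right, norm_smul, real_inner_comm]
        rw [mul_pow, Real.norm_eq_abs, sq_abs]
      have hkey : b (t+1) ≤ a1 * ⟪g, v (t+1) - x (t+1)⟫ + (1/2) * ‖v (t+1) - v t‖^2 := by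
        rw [hbdef (t+1), ← ha1, ← hg, hgu, hanorm, ← hu]
        nlinarith [hsq, hexp]
      have hb2 : a1 * (⟪Vop (x (t+1)), v (t+1) - x (t+1)⟫ + ψ (v (t+1)))
          ≥ a1 * ψ (x (t+1)) + a1 * ⟪g, v (t+1) - x (t+1)⟫ := by
        have hap := hapos t
        rw [hgsplit]
        nlinarith [h2]
      linarith
end

section
/- (Projecting Reduced Gradient Method) Let v_{t+1} = argmin_{x ∈ Q_t} β(v_t, x), where Q_t = {x ∈ dom ψ : ⟨V_ψ(x_{t+1}), x_{t+1} - x⟩ ≥ 0} contains x* but not v_t (i.e., ⟨V_ψ(x_{t+1}), v_t - x_{t+1}⟩ > 0 ≥ ⟨V_ψ(x_{t+1}), x* - x_{t+1}⟩). Then β(v_{t+1}, x*) ≤ β(v_t, x*) - b_{t+1}, where b_{t+1} = ⟨V_ψ(x_{t+1}), v_t - x_{t+1}⟩²/(2‖V_ψ(x_{t+1})‖*²). Consequently β(v_t, x*) + Σ_{i=1}^t b_i ≤ β(x_0, x*). -/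
open RealInnerProductSpace

theorem stmt_15 {E : Type*} [NormedAddCommGroup E] [InnerProductSpace ℝ E]
    (S : Set E) (d : E → ℝ) (gd : E → E)
    (hsc : ∀ x y : E, d y ≥ d x + ⟪gd x, y - x⟫ + (1/2) * ‖y - x‖^2)
    (β : E → E → ℝ)
    (hβ : ∀ x y : E, β x y = d y - d x - ⟪gd x, y - x⟫)
    (v x : ℕ → E) (Vψ : ℕ → E) (b : ℕ → ℝ)
    (xs : E) (hxs : xs ∈ S)
    (hvS : ∀ t, v t ∈ S) (hxS : ∀ t, x t ∈ S)
    (hcut : ∀ t, ⟪Vψ (t+1), v t - x (t+1)⟫ > 0)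
    (hsol : ∀ t, ⟪Vψ (t+1), xs - x (t+1)⟫ ≤ 0)
    (hVI : ∀ t, ∀ y ∈ S, ⟪Vψ (t+1), x (t+1) - y⟫ ≥ 0 →
        ⟪gd (v (t+1)) - gd (v t), y - v (t+1)⟫ ≥ 0)
    (hactive : ∀ t, ⟪Vψ (t+1), x (t+1) - v (t+1)⟫ = 0)
    (hbdef : ∀ t, b (t+1) = ⟪Vψ (t+1), v t - x (t+1)⟫^2 / (2 * ‖Vψ (t+1)‖^2)) :
    (∀ t, β (v (t+1)) xs ≤ β (v t) xs - b (t+1)) ∧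
      ∀ t, β (v t) xs + ∑ i ∈ Finset.Icc 1 t, b i ≤ β (v 0) xs := by
  have key : ∀ t, β (v (t+1)) xs ≤ β (v t) xs - b (t+1) := by
    intro t
    have hgpos : (0:ℝ) < ⟪Vψ (t+1), v t - x (t+1)⟫ := hcut t
    have hgne : Vψ (t+1) ≠ 0 := by
      intro h; rw [h] at hgpos; simp at hgpos
    have hgn : (0:ℝ) < ‖Vψ (t+1)‖ := norm_pos_iff.mpr hgne
    have hact := hactive t
    have ha : ⟪Vψ (t+1), v t - x (t+1)⟫ = ⟪Vψ (t+1), v t - v (t+1)⟫ := by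
      simp only [inner_sub_right] at hact ⊢
      linarith
    have hcs : ⟪Vψ (t+1), v t - v (t+1)⟫ ≤ ‖Vψ (t+1)‖ * ‖v t - v (t+1)‖ :=
      real_inner_le_norm _ _
    have hnn : (0:ℝ) ≤ ‖v t - v (t+1)‖ := norm_nonneg _
    have hbb : b (t+1) ≤ (1/2) * ‖v t - v (t+1)‖^2 := by
      rw [hbdef t, div_le_iff₀ (by positivity), ha]
      nlinarith [hgpos, ha, hcs, hnn, hgn]
    -- strong convexity
    have hsct := hsc (v t) (v (t+1))
    have hnorm : ‖v (t+1) - v t‖ = ‖v t - v (t+1)‖ := norm_sub_rev _ _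
    -- VI at xs
    have hxcond : ⟪Vψ (t+1), x (t+1) - xs⟫ ≥ 0 := by
      have := hsol t
      simp only [inner_sub_right] at this ⊢
      linarith
    have hvi := hVI t xs hxs hxcond
    simp only [inner_sub_left, inner_sub_right] at hvi hsct ⊢
    rw [hβ, hβ]
    simp only [inner_sub_right]
    rw [hnorm] at hsct
    linarith
  refine ⟨key, ?_⟩
  intro t
  induction t with
  | zero => simp
  | succ n ih =>
      have hsum : ∑ i ∈ Finset.Icc 1 (n+1), b i
          = (∑ i ∈ Finset.Icc 1 n, b i) + b (n+1) := by
        rw [Finset.sum_Icc_succ_top (by omega)]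
      rw [hsum]
      have := key n
      linarith
end

section
/- (Lower bound on universal step for tensor minimization step) Let f be p-times continuously differentiable with ‖∇f(y) - ∇T^f_{v,p}(y)‖* ≤ (L_p/p!)‖y - v‖^p, where T^f_{v,p} is the p-th order Taylor polynomial of f at v. Let T be the minimizer of T^f_{v,p}(y) + (M/(p+1)!)‖y-v‖^{p+1} + ψ(y) with M ≥ p·L_p (p ≥ 2, so the subproblem is convex), and let V_ψ(T) = ∇f(T) - ∇T^f_{v,p}(T) - (M/p!)‖T-v‖^{p-1}B(T-v). Then ⟨V_ψ(T), v - T⟩ ≥ γ_p(M)·‖V_ψ(T)‖*^{(p+1)/p}, where γ_p(M) = (p/M)·(p!/(p+1))^{1/p}·((M² - L_p²)/(p² - 1))^{(p-1)/(2p)}. -/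
open RealInnerProductSpace Real

lemma const_eq16 (q F L2 M a r : ℝ) (hq : 2 ≤ q) (hF : 0 < F) (hL2 : 0 < L2)
    (hM : 0 < M) (ha : 0 < a) (hr : 0 < r) :
    (L2 / F ^ (2:ℝ) * r ^ (2*q) / ((q-1)/(2*q))) ^ ((q-1)/(2*q)) *
      (a ^ (2:ℝ) / ((q+1)/(2*q))) ^ ((q+1)/(2*q))
    = 2 * ((M/F) * r ^ (q-1)) *
        ((q/M) * (F/(q+1)) ^ ((1:ℝ)/q) * (L2/(q^2-1)) ^ ((q-1)/(2*q))) *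
        a ^ ((q+1)/q) := by
  have hq0 : 0 < q := by linarith
  have hq1 : 0 < q - 1 := by linarith
  have hq1' : 0 < q + 1 := by linarith
  have hq2 : 0 < q^2 - 1 := by nlinarith
  have hw1 : 0 < (q-1)/(2*q) := by positivity
  have hw2 : 0 < (q+1)/(2*q) := by positivity
  have hX : 0 < L2 / F ^ (2:ℝ) * r ^ (2*q) / ((q-1)/(2*q)) := by positivity
  have hY : 0 < a ^ (2:ℝ) / ((q+1)/(2*q)) := by positivity
  have hre : ∀ x : ℝ, 0 < x → x ≠ 0 := fun x hx => ne_of_gt hx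
  apply Real.log_injOn_pos (Set.mem_Ioi.2 (by positivity)) (Set.mem_Ioi.2 (by positivity))
  have lX : Real.log (L2 / F ^ (2:ℝ) * r ^ (2*q) / ((q-1)/(2*q)))
      = (Real.log L2 - 2 * Real.log F) + (2*q) * Real.log r
        - (Real.log (q-1) - (Real.log 2 + Real.log q)) := by
    rw [Real.log_div (by positivity) (by positivity),
        Real.log_mul (by positivity) (by positivity),
        Real.log_div (hre _ hL2) (by positivity),
        Real.log_rpow hF, Real.log_rpow hr,
        Real.log_div (hre _ hq1) (by positivity),
        Real.log_mul (by norm_num) (hre _ hq0)]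
  have lY : Real.log (a ^ (2:ℝ) / ((q+1)/(2*q)))
      = 2 * Real.log a - (Real.log (q+1) - (Real.log 2 + Real.log q)) := by
    rw [Real.log_div (by positivity) (by positivity), Real.log_rpow ha,
        Real.log_div (hre _ hq1') (by positivity),
        Real.log_mul (by norm_num) (hre _ hq0)]
  have hq2f : q^2 - 1 = (q+1)*(q-1) := by ring
  rw [Real.log_mul (by positivity) (by positivity),
      Real.log_rpow hX, Real.log_rpow hY, lX, lY,
      Real.log_mul (by positivity) (by positivity),
      Real.log_mul (by positivity) (by positivity),
      Real.log_mul (by norm_num) (by positivity),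
      Real.log_mul (by positivity) (by positivity),
      Real.log_mul (by positivity) (by positivity),
      Real.log_rpow ha]
  rw [Real.log_mul (by positivity) (by positivity),
      Real.log_rpow (div_pos hF hq1'), Real.log_rpow (div_pos hL2 hq2), Real.log_rpow hr,
      Real.log_div (hre _ hM) (hre _ hF),
      Real.log_div (hre _ hq0) (hre _ hM),
      Real.log_div (hre _ hF) (hre _ hq1'),
      Real.log_div (hre _ hL2) (hre _ hq2), hq2f,
      Real.log_mul (hre _ hq1') (hre _ hq1)]
  field_simp
  ring

theorem stmt_16 {E : Type*} [NormedAddCommGroup E] [InnerProductSpace ℝ E]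
    (p : ℕ) (hp : 2 ≤ p)
    (Lp M : ℝ) (hLp : 0 < Lp) (hM : (p : ℝ) * Lp ≤ M)
    (v T : E) (gf gT : E → E)
    (hrem : ‖gf T - gT T‖ ≤ Lp / (Nat.factorial p : ℝ) * ‖T - v‖ ^ p)
    (Vψ : E)
    (hVψ : Vψ = gf T - gT T - ((M / (Nat.factorial p : ℝ)) * ‖T - v‖ ^ (p - 1)) • (T - v)) :
    ⟪Vψ, v - T⟫ ≥
      ((p : ℝ) / M) * ((Nat.factorial p : ℝ) / ((p : ℝ) + 1)) ^ ((1 : ℝ)/(p : ℝ)) *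
        ((M^2 - Lp^2) / ((p : ℝ)^2 - 1)) ^ (((p : ℝ) - 1)/(2 * (p : ℝ))) *
        ‖Vψ‖ ^ (((p : ℝ) + 1)/(p : ℝ)) := by
  set q : ℝ := (p : ℝ) with hqdef
  set F : ℝ := (Nat.factorial p : ℝ) with hFdef
  set L2 : ℝ := M^2 - Lp^2 with hL2def
  set r : ℝ := ‖T - v‖ with hrdef
  set a : ℝ := ‖Vψ‖ with hadef
  have hq : (2:ℝ) ≤ q := by rw [hqdef]; exact_mod_cast hp
  have hq0 : 0 < q := by linarith
  have hF : 0 < F := by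
    rw [hFdef]
    exact_mod_cast Nat.factorial_pos p
  have hM2 : 2 * Lp ≤ M := by nlinarith [mul_le_mul_of_nonneg_right hq hLp.le]
  have hMpos : 0 < M := by linarith
  have hL2 : 0 < L2 := by
    have h := mul_pos (show (0:ℝ) < M - Lp by linarith) (show (0:ℝ) < M + Lp by linarith)
    rw [hL2def]; nlinarith
  have hq1 : 0 < q - 1 := by linarith
  have hq1' : 0 < q + 1 := by linarith
  have he0 : (0:ℝ) < (q+1)/q := by positivity
  set K : ℝ := (q/M) * (F/(q+1)) ^ ((1:ℝ)/q) * (L2/(q^2-1)) ^ ((q-1)/(2*q)) with hKdef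
  rcases eq_or_lt_of_le (norm_nonneg Vψ) with ha0 | ha
  · -- Vψ = 0
    have hV0 : Vψ = 0 := by rwa [eq_comm, norm_eq_zero] at ha0
    have ha' : a = 0 := by rw [hadef, ← ha0]
    rw [hV0, ha']
    simp only [inner_zero_left, ge_iff_le]
    rw [Real.zero_rpow (ne_of_gt he0), mul_zero]
  · -- ‖Vψ‖ > 0
    have hr : 0 < r := by
      rcases eq_or_lt_of_le (norm_nonneg (T - v)) with h0 | h
      · exfalso
        have hTv : T - v = 0 := by rwa [eq_comm, norm_eq_zero] at h0
        have hrp : r = 0 := by rw [hrdef, hTv, norm_zero]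
        have hg0 : gf T - gT T = 0 := by
          have : ‖gf T - gT T‖ ≤ 0 := by
            rw [hrp] at hrem
            simpa [zero_pow (by omega : p ≠ 0)] using hrem
          exact norm_le_zero_iff.1 this
        have : Vψ = 0 := by rw [hVψ, hg0, hTv, smul_zero, sub_zero]
        rw [this, norm_zero] at ha; exact lt_irrefl 0 ha
      · exact h
    -- key inequality
    set s : ℝ := (M/F) * r ^ (p-1) with hsdef
    have hs : 0 < s := by positivity
    have hg : gf T - gT T = Vψ + s • (T - v) := by
      rw [hVψ]; rw [sub_add_cancel]
    have hsq : ‖gf T - gT T‖^2 ≤ (Lp/F * r^p)^2 := by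
      have := pow_le_pow_left₀ (norm_nonneg _) hrem 2
      simpa using this
    have hexp : ‖gf T - gT T‖^2 = a^2 + 2*(s * (-⟪Vψ, v - T⟫)) + s^2 * r^2 := by
      rw [hg, @norm_add_sq_real, real_inner_smul_right, norm_smul]
      have h1 : ⟪Vψ, T - v⟫ = -⟪Vψ, v - T⟫ := by rw [← inner_neg_right, neg_sub]
      rw [h1]
      rw [Real.norm_eq_abs, abs_of_nonneg hs.le]
      ring
    have e1 : r^(p-1) * r^(p-1) * r^2 = r^(2*p) := by
      rw [← pow_add, ← pow_add]; congr 1; omega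
    have hs2 : s^2 * r^2 = (M/F)^2 * r^(2*p) := by
      rw [hsdef, mul_pow, ← e1]; ring
    have hLp2 : (Lp/F * r^p)^2 = (Lp/F)^2 * r^(2*p) := by
      rw [mul_pow, ← pow_mul, mul_comm p 2]
    have hL2F : L2/F^2 * r^(2*p) = (M/F)^2 * r^(2*p) - (Lp/F)^2 * r^(2*p) := by
      field_simp; ring
    have key : a^2 + L2/F^2 * r^(2*p) ≤ 2 * s * ⟪Vψ, v - T⟫ := by
      rw [hexp, hs2, hLp2] at hsq
      linarith [hL2F, hsq]
    -- AM-GM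
    set w₁ : ℝ := (q-1)/(2*q) with hw1def
    set w₂ : ℝ := (q+1)/(2*q) with hw2def
    have hw1 : 0 < w₁ := by positivity
    have hw2 : 0 < w₂ := by positivity
    have hwsum : w₁ + w₂ = 1 := by rw [hw1def, hw2def]; field_simp; ring
    set X : ℝ := L2/F^2 * r^(2*p) / w₁ with hXdef
    set Y : ℝ := a^2 / w₂ with hYdef
    have hX : 0 ≤ X := by positivity
    have hY : 0 ≤ Y := by positivity
    have hgm := Real.geom_mean_le_arith_mean2_weighted hw1.le hw2.le hX hY hwsum
    have hwX : w₁ * X = L2/F^2 * r^(2*p) := mul_div_cancel₀ _ (ne_of_gt hw1)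
    have hwY : w₂ * Y = a^2 := mul_div_cancel₀ _ (ne_of_gt hw2)
    have hchain : X ^ w₁ * Y ^ w₂ ≤ 2 * s * ⟪Vψ, v - T⟫ := by
      rw [hwX, hwY] at hgm
      linarith
    -- conversions to rpow form
    have cF : F ^ (2:ℝ) = F ^ 2 := by
      rw [show (2:ℝ) = ((2:ℕ):ℝ) by norm_num, Real.rpow_natCast]
    have ca : a ^ (2:ℝ) = a ^ 2 := by
      rw [show (2:ℝ) = ((2:ℕ):ℝ) by norm_num, Real.rpow_natCast]
    have cr2 : r ^ (2*q) = r ^ (2*p) := by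
      rw [show 2*q = ((2*p:ℕ):ℝ) by push_cast; ring, Real.rpow_natCast]
    have cr1 : r ^ (q-1) = r ^ (p-1) := by
      rw [show q - 1 = ((p-1:ℕ):ℝ) by
            rw [Nat.cast_sub (by omega : 1 ≤ p)]; push_cast; ring,
          Real.rpow_natCast]
    have hce := const_eq16 q F L2 M a r hq hF hL2 hMpos ha hr
    rw [cF, ca, cr2, cr1] at hce
    rw [← hXdef, ← hYdef, ← hw1def, ← hw2def, ← hsdef, ← hKdef] at hce
    have hfinal : (2*s) * (K * a ^ ((q+1)/q)) ≤ (2*s) * ⟪Vψ, v - T⟫ := by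
      calc (2*s) * (K * a ^ ((q+1)/q)) = X ^ w₁ * Y ^ w₂ := by rw [hce]; ring
        _ ≤ 2 * s * ⟪Vψ, v - T⟫ := hchain
        _ = (2*s) * ⟪Vψ, v - T⟫ := by ring
    exact le_of_mul_le_mul_left hfinal (by positivity)
end

section
/- (Universal step bound for VI tensor step) Let x₊ satisfy ⟨G(x₊), y - x₊⟩ + ψ(y) ≥ ψ(x₊) for all y ∈ dom ψ, where G(y) = T^V_{v,p}(y) + M∇d_{p+2}(y - v), and define V_ψ(x₊) = V(x₊) - G(x₊). Assume the Taylor remainder bound ‖V(y) - T^V_{v,p}(y)‖* ≤ (M̂_{p+1}/(p+1)!)‖y - v‖^{p+1} and M > M̂_{p+1}/(p+1)!. Then ⟨V_ψ(x₊), v - x₊⟩ ≥ γ̂_p·‖V_ψ(x₊)‖*^{(p+2)/(p+1)}, where γ̂_p = (M - M̂_{p+1}/(p+1)!)·(M + M̂_{p+1}/(p+1)!)^{-(p+2)/(p+1)}. -/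
/-
The regularized step splits as `V_ψ(x₊) = e + M‖d‖ᵖ d` with `d = v - x₊` and `e = V(x₊) - T^V_{v,p}(x₊)`
a Taylor remainder of size at most `A‖d‖ᵖ⁺¹`, `A = M̂_{p+1}/(p+1)!`. Cauchy–Schwarz gives
`⟨V_ψ(x₊), d⟩ ≥ (M - A)‖d‖ᵖ⁺²` and the triangle inequality `‖V_ψ(x₊)‖ ≤ (M + A)‖d‖ᵖ⁺¹`;
raising the latter to the power `(p+2)/(p+1)` eliminates `‖d‖`.
-/

open RealInnerProductSpace Real

section RegularizedStep

variable {E : Type*} [NormedAddCommGroup E] [InnerProductSpace ℝ E]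

theorem le_inner_add_norm_pow_smul {e d : E} {a : ℝ} (c : ℝ) (p : ℕ)
    (he : ‖e‖ ≤ a * ‖d‖ ^ (p + 1)) :
    (c - a) * ‖d‖ ^ (p + 2) ≤ ⟪e + (c * ‖d‖ ^ p) • d, d⟫ := by
  have hcs : -(‖e‖ * ‖d‖) ≤ ⟪e, d⟫ := neg_le_of_abs_le (abs_real_inner_le_norm e d)
  have hrem : ‖e‖ * ‖d‖ ≤ a * ‖d‖ ^ (p + 1) * ‖d‖ := by gcongr
  rw [inner_add_left, real_inner_smul_left, real_inner_self_eq_norm_sq]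
  linear_combination hcs + hrem

theorem norm_add_norm_pow_smul_le {e d : E} {a : ℝ} (c : ℝ) (p : ℕ)
    (he : ‖e‖ ≤ a * ‖d‖ ^ (p + 1)) :
    ‖e + (c * ‖d‖ ^ p) • d‖ ≤ (|c| + a) * ‖d‖ ^ (p + 1) :=
  calc ‖e + (c * ‖d‖ ^ p) • d‖ ≤ ‖e‖ + ‖(c * ‖d‖ ^ p) • d‖ := norm_add_le _ _
    _ = ‖e‖ + |c| * ‖d‖ ^ (p + 1) := by
      rw [norm_smul, norm_mul, norm_pow, norm_norm, Real.norm_eq_abs, pow_succ]; ring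
    _ ≤ (|c| + a) * ‖d‖ ^ (p + 1) := by linarith

end RegularizedStep

theorem pow_succ_rpow_div_eq_pow_add_two {r : ℝ} (hr : 0 ≤ r) (p : ℕ) :
    (r ^ (p + 1)) ^ (((p : ℝ) + 2) / ((p : ℝ) + 1)) = r ^ (p + 2) := by
  rw [← Real.rpow_natCast r (p + 1), ← Real.rpow_mul hr, ← Real.rpow_natCast r (p + 2)]
  congr 1
  push_cast
  field_simp

theorem mul_rpow_neg_mul_rpow_le_of_le_mul_pow {L K s r : ℝ} (p : ℕ) (hL : 0 ≤ L) (hK : 0 < K)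
    (hs : 0 ≤ s) (hr : 0 ≤ r) (h : s ≤ K * r ^ (p + 1)) :
    L * K ^ (-(((p : ℝ) + 2) / ((p : ℝ) + 1))) * s ^ (((p : ℝ) + 2) / ((p : ℝ) + 1))
      ≤ L * r ^ (p + 2) := by
  set q : ℝ := ((p : ℝ) + 2) / ((p : ℝ) + 1)
  have hs_q : s ^ q ≤ K ^ q * r ^ (p + 2) := by
    calc s ^ q ≤ (K * r ^ (p + 1)) ^ q := by gcongr
      _ = K ^ q * r ^ (p + 2) := by
        rw [Real.mul_rpow hK.le (by positivity), pow_succ_rpow_div_eq_pow_add_two hr]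
  calc L * K ^ (-q) * s ^ q ≤ L * K ^ (-q) * (K ^ q * r ^ (p + 2)) := by gcongr
    _ = L * r ^ (p + 2) := by
      rw [Real.rpow_neg hK.le]
      field_simp [(Real.rpow_pos_of_pos hK q).ne']

theorem stmt_18 {E : Type*} [NormedAddCommGroup E] [InnerProductSpace ℝ E]
    (p : ℕ) (Mhat M : ℝ) (hMhat : 0 ≤ Mhat)
    (hM : Mhat / (Nat.factorial (p+1) : ℝ) < M)
    (v xplus : E) (Vop TV : E → E)
    (hrem : ∀ y : E, ‖Vop y - TV y‖ ≤ Mhat / (Nat.factorial (p+1) : ℝ) * ‖y - v‖ ^ (p+1))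
    (Vψ : E)
    (hVψ : Vψ = Vop xplus - TV xplus + (M * ‖v - xplus‖ ^ p) • (v - xplus)) :
    ⟪Vψ, v - xplus⟫ ≥
      (M - Mhat / (Nat.factorial (p+1) : ℝ)) *
        (M + Mhat / (Nat.factorial (p+1) : ℝ)) ^ (-(((p : ℝ) + 2)/((p : ℝ) + 1))) *
        ‖Vψ‖ ^ (((p : ℝ) + 2)/((p : ℝ) + 1)) := by
  set A : ℝ := Mhat / (Nat.factorial (p+1) : ℝ)
  have hA : 0 ≤ A := by positivity
  have he : ‖Vop xplus - TV xplus‖ ≤ A * ‖v - xplus‖ ^ (p + 1) := by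
    simpa only [norm_sub_rev xplus v] using hrem xplus
  have hinner := le_inner_add_norm_pow_smul M p he
  have hnorm := norm_add_norm_pow_smul_le M p he
  rw [abs_of_pos (by linarith), ← hVψ] at hnorm
  rw [← hVψ] at hinner
  exact (mul_rpow_neg_mul_rpow_le_of_le_mul_pow p (by linarith) (by linarith) (norm_nonneg _)
    (norm_nonneg _) hnorm).trans hinner
end

section
/- (Linear convergence for uniformly monotone CVI) Suppose the one-step inequality (1/2)‖v_t - x*‖² - (1/2)‖v̂_{t+1} - x*‖² ≥ b_{t+1} + a_{t+1}σ‖x_{t+1} - x*‖^{p+2} holds with a_{t+1} ≥ γ̂·g^{-p/(p+1)}, b_{t+1} ≥ (1/2)γ̂²·g^{2/(p+1)} where g = ‖V_ψ(x_{t+1})‖* > 0, σ > 0, γ̂ > 0. Define α = (p+2)·γ̂·(γ̂/p)^{p/(p+2)}·σ^{2/(p+2)} and v_{t+1} = (v̂_{t+1} + α·x_{t+1})/(1+α). Then ‖v_{t+1} - x*‖² ≤ ‖v_t - x*‖²/(1+α), and hence ‖v_t - x*‖ ≤ (1+α)^{-t/2}‖x_0 - x*‖. -/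
open RealInnerProductSpace Real

/-!
Weighted AM-GM with weights `p/(p+2)` and `2/(p+2)` bounds `(γ²/2) u² + γ σ r^(p+2) / u^p` below by
`(α/2) r²` uniformly in `u = g^(1/(p+1)) > 0`, so the one-step inequality gives
`‖v̂ₜ₊₁ - x*‖² + α ‖xₜ₊₁ - x*‖² ≤ ‖vₜ - x*‖²`. Convexity of `‖· - x*‖²` at the averaged point
`vₜ₊₁` turns this into `‖vₜ₊₁ - x*‖² ≤ ‖vₜ - x*‖² / (1 + α)`, and iterating gives the rate.
-/

theorem Real.rpow_pow_of_mul_eq {x y : ℝ} {n k : ℕ} (hx : 0 ≤ x) (h : y * n = k) :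
    (x ^ y) ^ n = x ^ k := by
  rw [← Real.rpow_mul_natCast hx, h, Real.rpow_natCast]

theorem young_le_half_mul_sq_add_div_pow {p : ℕ} (hp : 0 < p) {c σ r u : ℝ} (hc : 0 ≤ c)
    (hσ : 0 ≤ σ) (hr : 0 ≤ r) (hu : 0 < u) :
    ((p : ℝ) + 2) / 2 * (c / p) ^ ((p : ℝ) / (p + 2)) * σ ^ ((2 : ℝ) / (p + 2)) * r ^ 2 ≤
      c / 2 * u ^ 2 + σ * r ^ (p + 2) / u ^ p := by
  have hp0 : (0 : ℝ) < p := by exact_mod_cast hp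
  set w₁ : ℝ := p / (p + 2) with hw₁
  set w₂ : ℝ := 2 / (p + 2) with hw₂
  set P₁ : ℝ := ((p : ℝ) + 2) / p * (c / 2 * u ^ 2) with hP₁
  set P₂ : ℝ := ((p : ℝ) + 2) / 2 * (σ * r ^ (p + 2) / u ^ p) with hP₂
  have hw₁n : w₁ * ((p + 2 : ℕ) : ℝ) = p := by rw [hw₁]; push_cast; field_simp
  have hw₂n : w₂ * ((p + 2 : ℕ) : ℝ) = (2 : ℕ) := by rw [hw₂]; push_cast; field_simp
  have hamgm := Real.geom_mean_le_arith_mean2_weighted (by positivity : 0 ≤ w₁)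
    (by positivity : 0 ≤ w₂) (by positivity : 0 ≤ P₁) (by positivity : 0 ≤ P₂)
    (by rw [hw₁, hw₂]; field_simp)
  have harith : w₁ * P₁ + w₂ * P₂ = c / 2 * u ^ 2 + σ * r ^ (p + 2) / u ^ p := by
    rw [hw₁, hw₂, hP₁, hP₂]; field_simp
  -- the weights are chosen so that `u` cancels from `P₁ ^ w₁ * P₂ ^ w₂`
  have hgeom : P₁ ^ w₁ * P₂ ^ w₂ = ((p : ℝ) + 2) / 2 * (c / p) ^ w₁ * σ ^ w₂ * r ^ 2 := by
    refine (pow_left_inj₀ (by positivity) (by positivity) (by omega : p + 2 ≠ 0)).1 ?_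
    rw [mul_pow, mul_pow, mul_pow, mul_pow, Real.rpow_pow_of_mul_eq (by positivity) hw₁n,
      Real.rpow_pow_of_mul_eq (by positivity) hw₂n, Real.rpow_pow_of_mul_eq (by positivity) hw₁n,
      Real.rpow_pow_of_mul_eq hσ hw₂n, hP₁, hP₂]
    simp only [mul_pow, div_pow]
    field_simp
    ring
  rw [← hgeom, ← harith]
  exact hamgm

noncomputable def linearRate (p : ℕ) (σ γ : ℝ) : ℝ :=
  ((p : ℝ) + 2) * γ * (γ / p) ^ ((p : ℝ) / (p + 2)) * σ ^ ((2 : ℝ) / (p + 2))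

theorem linearRate_nonneg {p : ℕ} {σ γ : ℝ} (hσ : 0 ≤ σ) (hγ : 0 ≤ γ) : 0 ≤ linearRate p σ γ := by
  unfold linearRate; positivity

theorem linearRate_div_two_mul_sq_le {p : ℕ} (hp : 0 < p) {σ γ a b g r : ℝ} (hσ : 0 ≤ σ)
    (hγ : 0 ≤ γ) (hr : 0 ≤ r) (hg : 0 < g)
    (ha : a ≥ γ * g ^ (-((p : ℝ) / ((p : ℝ) + 1))))
    (hb : b ≥ (1 / 2) * γ ^ 2 * g ^ ((2 : ℝ) / ((p : ℝ) + 1))) :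
    linearRate p σ γ / 2 * r ^ 2 ≤ b + a * σ * r ^ (p + 2) := by
  set u := g ^ (1 / ((p : ℝ) + 1))
  have hu : 0 < u := by positivity
  have hgpow : ∀ k : ℕ, g ^ ((k : ℝ) / ((p : ℝ) + 1)) = u ^ k := fun k => by
    rw [← Real.rpow_mul_natCast hg.le]; ring_nf
  rw [Real.rpow_neg hg.le, hgpow] at ha
  rw [show (2 : ℝ) / ((p : ℝ) + 1) = (2 : ℕ) / ((p : ℝ) + 1) by norm_num, hgpow] at hb
  have hyoung := mul_le_mul_of_nonneg_left (young_le_half_mul_sq_add_div_pow hp hγ hσ hr hu) hγ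
  calc linearRate p σ γ / 2 * r ^ 2
      = γ * (((p : ℝ) + 2) / 2 * (γ / p) ^ ((p : ℝ) / (p + 2)) * σ ^ ((2 : ℝ) / (p + 2)) *
          r ^ 2) := by
        unfold linearRate; ring
    _ ≤ γ * (γ / 2 * u ^ 2 + σ * r ^ (p + 2) / u ^ p) := hyoung
    _ = 1 / 2 * γ ^ 2 * u ^ 2 + γ * (u ^ p)⁻¹ * (σ * r ^ (p + 2)) := by ring
    _ ≤ b + a * σ * r ^ (p + 2) := by
        rw [mul_assoc a]; gcongr

theorem sq_norm_smul_add_smul_sub_le {E : Type*} [SeminormedAddCommGroup E] [NormedSpace ℝ E]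
    {α : ℝ} (hα : 0 ≤ α) (u w z : E) :
    ‖(1 / (1 + α)) • (u + α • w) - z‖ ^ 2 ≤ (‖u - z‖ ^ 2 + α * ‖w - z‖ ^ 2) / (1 + α) := by
  have hα₁ : 0 < 1 + α := by linarith
  set y := (1 / (1 + α)) • (u + α • w) - z
  have hy : (1 + α) • y = (u - z) + α • (w - z) := by
    rw [smul_sub, smul_smul, mul_one_div_cancel hα₁.ne', one_smul]
    module
  have hnorm : (1 + α) * ‖y‖ ≤ ‖u - z‖ + α * ‖w - z‖ := by
    calc (1 + α) * ‖y‖ = ‖(1 + α) • y‖ := by rw [norm_smul, Real.norm_of_nonneg hα₁.le]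
      _ ≤ ‖u - z‖ + ‖α • (w - z)‖ := hy ▸ norm_add_le _ _
      _ = ‖u - z‖ + α * ‖w - z‖ := by rw [norm_smul, Real.norm_of_nonneg hα]
  rw [le_div_iff₀ hα₁]
  -- `(A + α B)² ≤ (1 + α)(A² + α B²)` is Cauchy–Schwarz in two dimensions
  nlinarith [mul_self_le_mul_self (by positivity) hnorm, norm_nonneg y,
    mul_nonneg hα (sq_nonneg (‖u - z‖ - ‖w - z‖))]

theorem le_rpow_neg_half_mul_of_sq_le_div {d : ℕ → ℝ} {q : ℝ} (hq : 0 < q) (hd : ∀ t, 0 ≤ d t)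
    (h : ∀ t, d (t + 1) ^ 2 ≤ d t ^ 2 / q) (t : ℕ) : d t ≤ q ^ (-((t : ℝ) / 2)) * d 0 := by
  set ρ := q ^ (-(1 / 2 : ℝ))
  have hρ : ρ ^ 2 = q⁻¹ := by
    rw [← Real.rpow_mul_natCast hq.le, ← Real.rpow_neg_one]; norm_num
  rw [show -((t : ℝ) / 2) = -(1 / 2) * t by ring, Real.rpow_mul_natCast hq.le]
  induction t with
  | zero => simp
  | succ t ih =>
    refine le_of_pow_le_pow_left₀ two_ne_zero (mul_nonneg (by positivity) (hd 0)) ?_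
    calc d (t + 1) ^ 2 ≤ ρ ^ 2 * d t ^ 2 := by rw [hρ, inv_mul_eq_div]; exact h t
      _ ≤ ρ ^ 2 * (ρ ^ t * d 0) ^ 2 := by gcongr; exact hd t
      _ = (ρ ^ (t + 1) * d 0) ^ 2 := by ring

theorem stmt_19 {E : Type*} [NormedAddCommGroup E] [InnerProductSpace ℝ E]
    (p : ℕ) (hp : 1 ≤ p)
    (σ γ : ℝ) (hσ : 0 < σ) (hγ : 0 < γ)
    (v vhat x : ℕ → E) (xs : E) (a b g : ℕ → ℝ)
    (hg : ∀ t, 0 < g (t+1))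
    (ha : ∀ t, a (t+1) ≥ γ * g (t+1) ^ (-((p : ℝ)/((p : ℝ) + 1))))
    (hb : ∀ t, b (t+1) ≥ (1/2) * γ^2 * g (t+1) ^ ((2 : ℝ)/((p : ℝ) + 1)))
    (hstep : ∀ t, (1/2) * ‖v t - xs‖^2 - (1/2) * ‖vhat (t+1) - xs‖^2 ≥
        b (t+1) + a (t+1) * σ * ‖x (t+1) - xs‖ ^ (p + 2))
    (α : ℝ)
    (hα : α = ((p : ℝ) + 2) * γ * (γ / (p : ℝ)) ^ ((p : ℝ)/((p : ℝ) + 2)) *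
        σ ^ ((2 : ℝ)/((p : ℝ) + 2)))
    (hupd : ∀ t, v (t+1) = (1/(1 + α)) • (vhat (t+1) + α • x (t+1))) :
    (∀ t, ‖v (t+1) - xs‖^2 ≤ ‖v t - xs‖^2 / (1 + α)) ∧
      ∀ t, ‖v t - xs‖ ≤ (1 + α) ^ (-((t : ℝ)/2)) * ‖v 0 - xs‖ := by
  replace hα : α = linearRate p σ γ := hα
  have hα₀ : 0 ≤ α := hα ▸ linearRate_nonneg hσ.le hγ.le
  have hdescent : ∀ t, ‖vhat (t+1) - xs‖ ^ 2 + α * ‖x (t+1) - xs‖ ^ 2 ≤ ‖v t - xs‖ ^ 2 := by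
    intro t
    have := linearRate_div_two_mul_sq_le hp hσ.le hγ.le (norm_nonneg (x (t+1) - xs)) (hg t)
      (ha t) (hb t)
    rw [← hα] at this
    linarith [hstep t]
  have hcontract : ∀ t, ‖v (t+1) - xs‖ ^ 2 ≤ ‖v t - xs‖ ^ 2 / (1 + α) := fun t => by
    rw [hupd t]
    exact (sq_norm_smul_add_smul_sub_le hα₀ _ _ _).trans (by gcongr; exact hdescent t)
  exact ⟨hcontract, le_rpow_neg_half_mul_of_sq_le_div (by linarith) (fun _ => norm_nonneg _)
    hcontract⟩
end
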